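/- Let A, B, C be subspaces of E and o an E-orbit contained in X_A. Then the number of orbits 𝓜 of the E × B-action on X²_{AC} (given by (e,b)·(x,y) = (e+b+x, e+y)) satisfying p₁𝓜 = o equals |E| · |X̄_C| · |U_{ABC}| / (|A| · |B| · |C|), where X̄_C is the set of E-orbits in X_C and U_{ABC} := {(a,b,c) ∈ A × B × C : a + b + c = 0}. -/

import Mathlib

open scoped Classical

set_option linter.unusedSectionVars false

noncomputable section

namespace Lusztig

variable (E X : Type) [AddCommGroup E] [Module (ZMod 2) E] [Fintype E]
  [Fintype X] [AddAction E X]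

/-- The stabilizer of `x` in `E`, as a subset of `E`. -/
def stabSet (x : X) : Set E := {e : E | e +ᵥ x = x}

/-- `X_A`: the set of points of `X` whose stabilizer in `E` equals `A`. -/
def XA (A : Submodule (ZMod 2) E) : Set X := {x : X | stabSet E X x = (A : Set E)}

/-- `X²_{AB} = X_A × X_B`. -/
def X2 (A B : Submodule (ZMod 2) E) : Set (X × X) := (XA E X A) ×ˢ (XA E X B)

/-- The `E`-orbit of `x` in `X`. -/
def orb (x : X) : Set X := {y : X | ∃ e : E, y = e +ᵥ x}

/-- The `E`-orbit of `(x,y)` for the diagonal action of `E` on `X × X`. -/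
def orb2 (x y : X) : Set (X × X) := {q : X × X | ∃ e : E, q = (e +ᵥ x, e +ᵥ y)}

/-- `O` is an `E`-orbit (for the diagonal action) contained in `X²_{AB}`. -/
def IsOrb2 (A B : Submodule (ZMod 2) E) (O : Set (X × X)) : Prop :=
  ∃ x y : X, x ∈ XA E X A ∧ y ∈ XA E X B ∧ O = orb2 E X x y

/-- The `E × B`-orbit of `(x,y)` for the action `(e,b)·(x,y) = (e+b+x, e+y)`. -/
def orbEB (B : Submodule (ZMod 2) E) (x y : X) : Set (X × X) :=
  {q : X × X | ∃ e b : E, b ∈ B ∧ q = ((e + b) +ᵥ x, e +ᵥ y)}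

/-- `M` is an `E × B`-orbit contained in `X²_{AC}` for the action
`(e,b)·(x,y) = (e+b+x, e+y)`. -/
def IsOrbEB (A B C : Submodule (ZMod 2) E) (M : Set (X × X)) : Prop :=
  ∃ x y : X, x ∈ XA E X A ∧ y ∈ XA E X C ∧ M = orbEB E X B x y

/-- Image under the first projection. -/
def p1 (S : Set (X × X)) : Set X := Prod.fst '' S

/-- Image under the second projection. -/
def p2 (S : Set (X × X)) : Set X := Prod.snd '' S

/-- `U_{ABC} = {(a,b,c) ∈ A × B × C : a + b + c = 0}`. -/
def UABC (A B C : Submodule (ZMod 2) E) : Set (E × E × E) :=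
  {t : E × E × E | t.1 ∈ A ∧ t.2.1 ∈ B ∧ t.2.2 ∈ C ∧ t.1 + t.2.1 + t.2.2 = 0}

/-- `X̄_C`: the set of `E`-orbits contained in `X_C`. -/
def barX (C : Submodule (ZMod 2) E) : Set (Set X) :=
  {s : Set X | ∃ x ∈ XA E X C, s = orb E X x}

/-- The dual (space of linear forms `P → ℤ/2`) of a subspace `P` of `E`. -/
abbrev Dl (P : Submodule (ZMod 2) E) : Type := ↥P →ₗ[ZMod 2] ZMod 2

/-- Restriction of a linear form along an inclusion of subspaces. -/
def res {P Q : Submodule (ZMod 2) E} (h : P ≤ Q) (φ : Dl E Q) : Dl E P :=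
  φ.comp (Submodule.inclusion h)

theorem leAB (A B C : Submodule (ZMod 2) E) : A ⊓ B ⊓ C ≤ A ⊓ B := inf_le_left
theorem leBC (A B C : Submodule (ZMod 2) E) : A ⊓ B ⊓ C ≤ B ⊓ C :=
  le_inf (inf_le_left.trans inf_le_right) inf_le_right
theorem leAC (A B C : Submodule (ZMod 2) E) : A ⊓ B ⊓ C ≤ A ⊓ C :=
  le_inf (inf_le_left.trans inf_le_left) inf_le_right
theorem leBA (A B : Submodule (ZMod 2) E) : A ⊓ B ≤ B ⊓ A := le_inf inf_le_right inf_le_left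

/-- The convolution product `𝓕_{AB} × 𝓕_{BC} → 𝓕_{AC}`. -/
def conv (A B C : Submodule (ZMod 2) E)
    (f₁ : (X × X) × Dl E (A ⊓ B) → ℂ) (f₂ : (X × X) × Dl E (B ⊓ C) → ℂ) :
    (X × X) × Dl E (A ⊓ C) → ℂ :=
  fun p =>
    (∑ᶠ (y : X) (_ : y ∈ XA E X B) (ε₁ : Dl E (A ⊓ B)) (ε₂ : Dl E (B ⊓ C))
        (_ : res E (leAB E A B C) ε₁ + res E (leBC E A B C) ε₂
              + res E (leAC E A B C) p.2 = 0),
        f₁ ((p.1.1, y), ε₁) * f₂ ((y, p.1.2), ε₂)) *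
      (Nat.card ↥(A ⊓ B ⊓ C) : ℂ) / (Nat.card ↥(A ⊓ C) : ℂ)

/-- The defining conditions for membership in `𝓕_{AB}`: supported on `X²_{AB}` and
invariant under the diagonal `E`-action. -/
def MemF (A B : Submodule (ZMod 2) E) (f : (X × X) × Dl E (A ⊓ B) → ℂ) : Prop :=
  (∀ p : (X × X) × Dl E (A ⊓ B), p.1 ∉ X2 E X A B → f p = 0) ∧
  (∀ (e : E) (x y : X) (ε : Dl E (A ⊓ B)), f ((e +ᵥ x, e +ᵥ y), ε) = f ((x, y), ε))

/-- `𝓕_{AB}` as a subspace of the space of all functions. -/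
def FAB (A B : Submodule (ZMod 2) E) : Submodule ℂ ((X × X) × Dl E (A ⊓ B) → ℂ) where
  carrier := {f | MemF E X A B f}
  add_mem' := by
    intro a b ha hb
    exact ⟨fun p hp => by simp [ha.1 p hp, hb.1 p hp],
      fun e x y ε => by simp [Pi.add_apply, ha.2 e x y ε, hb.2 e x y ε]⟩
  zero_mem' := ⟨fun p hp => rfl, fun e x y ε => rfl⟩
  smul_mem' := by
    intro c a ha
    exact ⟨fun p hp => by simp [Pi.smul_apply, ha.1 p hp],
      fun e x y ε => by simp [Pi.smul_apply, ha.2 e x y ε]⟩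

/-- `[Ξ]^ε`. -/
def br (A B : Submodule (ZMod 2) E) (Ξ : Set (X × X)) (ε : Dl E (A ⊓ B)) :
    (X × X) × Dl E (A ⊓ B) → ℂ :=
  fun p => if p.1 ∈ Ξ ∧ p.2 = ε then 1 else 0

/-- The ambient space of `𝓕 = ⊕_{A,B} 𝓕_{AB}` (all summands at once). -/
abbrev FF : Type := ∀ A B : Submodule (ZMod 2) E, (X × X) × Dl E (A ⊓ B) → ℂ

/-- The embedding of the `(A,B)` summand into `𝓕`. -/
def emb (A B : Submodule (ZMod 2) E) (f : (X × X) × Dl E (A ⊓ B) → ℂ) : FF E X :=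
  fun A' B' p =>
    if h : A = A' ∧ B = B' then f (p.1, cast (by rw [h.1, h.2]) p.2) else 0

/-- `𝓕` as a subspace of `FF`: componentwise supported on `X²_{AB}` and `E`-invariant. -/
def FFsub : Submodule ℂ (FF E X) where
  carrier := {g | ∀ A B, MemF E X A B (g A B)}
  add_mem' := by
    intro a b ha hb A B
    exact ⟨fun p hp => by simp [(ha A B).1 p hp, (hb A B).1 p hp],
      fun e x y ε => by simp [(ha A B).2 e x y ε, (hb A B).2 e x y ε]⟩
  zero_mem' := fun A B => ⟨fun p hp => rfl, fun e x y ε => rfl⟩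
  smul_mem' := by
    intro c a ha A B
    exact ⟨fun p hp => by simp [(ha A B).1 p hp],
      fun e x y ε => by simp [(ha A B).2 e x y ε]⟩

/-- The product on `𝓕` (zero between summands `𝓕_{AB}`, `𝓕_{B'C}` with `B ≠ B'`). -/
def mulFF (g h : FF E X) : FF E X :=
  fun A C => ∑ᶠ B : Submodule (ZMod 2) E, conv E X A B C (g A B) (h B C)

/-- The diagonal `Δ_A ⊆ X²_{AA}`. -/
def diagSet (A : Submodule (ZMod 2) E) : Set (X × X) :=
  {q : X × X | q.1 ∈ XA E X A ∧ q.2 = q.1}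

/-- The element `∑_A [Δ_A]^0` of `𝓕`. -/
def unitFF : FF E X :=
  ∑ᶠ A : Submodule (ZMod 2) E, emb E X A A (br E X A A (diagSet E X A) 0)

/-- The map `f ↦ f^#` on `𝓕`. -/
def shFF (g : FF E X) : FF E X :=
  fun A B p => g B A ((p.1.2, p.1.1), res E (leBA E B A) p.2)

/-- `𝒪 • 𝒪'`. -/
def bullet (O O' : Set (X × X)) : Set (X × X) :=
  {q : X × X | ∃ y : X, (q.1, y) ∈ O ∧ (y, q.2) ∈ O'}

/-- `∑_{ε ∈ α̃} [𝓜]^ε ∈ 𝓕_{AC}`, where `α̃` is the fibre of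
`(A∩C)* → (A∩B∩C)*` over `α`. -/
def bSum (A B C : Submodule (ZMod 2) E) (M : Set (X × X)) (α : Dl E (A ⊓ B ⊓ C)) :
    (X × X) × Dl E (A ⊓ C) → ℂ :=
  ∑ᶠ (ε : Dl E (A ⊓ C)) (_ : res E (leAC E A B C) ε = α), br E X A C M ε

/-- The set `𝓑_{oBC} ⊆ 𝓕` (embedded in `FF`). -/
def BoBC (A B C : Submodule (ZMod 2) E) (o : Set X) : Set (FF E X) :=
  {g | ∃ (M : Set (X × X)) (α : Dl E (A ⊓ B ⊓ C)),
      IsOrbEB E X A B C M ∧ p1 X M = o ∧ g = emb E X A C (bSum E X A B C M α)}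

/-- The set `𝓑_{oB} = ⊔_C 𝓑_{oBC}`. -/
def BoB (A B : Submodule (ZMod 2) E) (o : Set X) : Set (FF E X) :=
  ⋃ C : Submodule (ZMod 2) E, BoBC E X A B C o

/-- `[[oB]]`, the `ℂ`-span of `𝓑_{oB}`. -/
def ooB (A B : Submodule (ZMod 2) E) (o : Set X) : Submodule ℂ (FF E X) :=
  Submodule.span ℂ (BoB E X A B o)

/-!
The map `(x, y) ↦ orbEB x y` sends `o × X_C` onto the orbits to be counted, and its fibre over
an orbit `𝓜` is `𝓜` itself. By orbit–stabilizer `|𝓜| = |E| |B| / |U_{ABC}|`: the stabilizer of a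
point of `X_A × X_C` in `E × B` is `{(e, b) : e + b ∈ A, e ∈ C}`, which `(e, b) ↦ (-(e + b), b, e)`
identifies with `U_{ABC}`. Counting `o × X_C` both ways, with `|o| = |E| / |A|` and
`|X_C| = |X̄_C| |E| / |C|`, gives the formula.
-/

section Counting

variable {α β γ G : Type*} [AddCommGroup G]

theorem natCard_eq_card_range_mul [Finite α] (f : α → β) {q : ℚ}
    (hf : ∀ a, (Nat.card (f ⁻¹' {f a}) : ℚ) = q) :
    (Nat.card α : ℚ) = Nat.card (Set.range f) * q := by
  have := Fintype.ofFinite α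
  have hfib : ∀ b : Set.range f,
      (Nat.card {a // Set.rangeFactorization f a = b} : ℚ) = q := by
    rintro ⟨_, a, rfl⟩
    rw [← hf a]
    congr 1
    exact Nat.card_congr (Equiv.subtypeEquivRight fun a' => by
      simp [Set.rangeFactorization, Subtype.ext_iff])
  rw [← Nat.card_congr (Equiv.sigmaFiberEquiv (Set.rangeFactorization f)), Nat.card_sigma,
    Nat.cast_sum, Finset.sum_congr rfl fun b _ => hfib b, Finset.sum_const, nsmul_eq_mul,
    Finset.card_univ, Nat.card_eq_fintype_card]

theorem natCard_eq_card_range_mul_card [Finite G] (f : G → β)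
    (K : AddSubgroup G) (hf : ∀ g h, f g = f h ↔ h - g ∈ K) :
    (Nat.card G : ℚ) = Nat.card (Set.range f) * Nat.card K := by
  refine natCard_eq_card_range_mul f fun g => ?_
  congr 1
  refine Nat.card_congr
    { toFun := fun h => ⟨h - g, (hf g h).1 h.2.symm⟩
      invFun := fun k => ⟨k + g, ((hf g _).2 (by simp)).symm⟩
      left_inv := fun h => by simp
      right_inv := fun k => by simp }

theorem natCard_eq_card_image_mul {T : Set γ} (O : γ → Set γ) [Finite T] {q : ℚ}
    (mem_self : ∀ x, x ∈ O x) (eq_of_mem : ∀ x y, y ∈ O x → O y = O x)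
    (subset : ∀ x ∈ T, O x ⊆ T) (card : ∀ x ∈ T, (Nat.card (O x) : ℚ) = q) :
    (Nat.card T : ℚ) = Nat.card (O '' T) * q := by
  rw [Set.image_eq_range]
  refine natCard_eq_card_range_mul _ fun x => ?_
  rw [← card x x.2]
  congr 1
  refine Nat.card_congr
    { toFun := fun y => ⟨y, (show O y = O x from y.2).subset (mem_self y)⟩
      invFun := fun y => ⟨⟨y, subset x x.2 y.2⟩, eq_of_mem x y y.2⟩
      left_inv := fun y => rfl
      right_inv := fun y => rfl }

end Counting

section Orbits

variable {E X}

theorem mem_iff_vadd_eq_of_mem_XA {A : Submodule (ZMod 2) E} {x : X} (hx : x ∈ XA E X A)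
    {a : E} : a ∈ A ↔ a +ᵥ x = x := by
  rw [← SetLike.mem_coe, ← hx]
  rfl

theorem vadd_eq_vadd_iff_sub_mem {A : Submodule (ZMod 2) E} {x : X} (hx : x ∈ XA E X A)
    {e e' : E} : e +ᵥ x = e' +ᵥ x ↔ e' - e ∈ A := by
  rw [mem_iff_vadd_eq_of_mem_XA hx, sub_eq_neg_add, add_vadd, neg_vadd_eq_iff, eq_comm]

theorem vadd_mem_XA {A : Submodule (ZMod 2) E} (e : E) {x : X} (hx : x ∈ XA E X A) :
    e +ᵥ x ∈ XA E X A := by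
  refine Eq.trans (Set.ext fun f => ?_) hx
  change f +ᵥ e +ᵥ x = e +ᵥ x ↔ f +ᵥ x = x
  rw [← add_vadd, add_comm, add_vadd, vadd_left_cancel_iff]

theorem orb_eq_range (x : X) : orb E X x = Set.range fun e : E => e +ᵥ x := by
  ext y
  simp [orb, eq_comm]

theorem mem_orb_self (x : X) : x ∈ orb E X x := ⟨0, (zero_vadd E x).symm⟩

theorem orb_eq_of_mem {x y : X} (h : y ∈ orb E X x) : orb E X y = orb E X x := by
  obtain ⟨e, rfl⟩ := h
  ext z
  constructor
  · rintro ⟨f, rfl⟩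
    exact ⟨f + e, (add_vadd f e x).symm⟩
  · rintro ⟨f, rfl⟩
    exact ⟨f - e, by rw [← add_vadd, sub_add_cancel]⟩

theorem orb_subset_XA {A : Submodule (ZMod 2) E} {x : X} (hx : x ∈ XA E X A) :
    orb E X x ⊆ XA E X A := by
  rintro _ ⟨e, rfl⟩
  exact vadd_mem_XA e hx

theorem natCard_orb {A : Submodule (ZMod 2) E} {x : X} (hx : x ∈ XA E X A) :
    (Nat.card (orb E X x) : ℚ) = Nat.card E / Nat.card A := by
  have hA : (Nat.card A : ℚ) ≠ 0 := by exact_mod_cast Nat.card_pos.ne'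
  rw [eq_div_iff hA, orb_eq_range,
    natCard_eq_card_range_mul_card _ A.toAddSubgroup fun _ _ => vadd_eq_vadd_iff_sub_mem hx]
  rfl

theorem natCard_XA (C : Submodule (ZMod 2) E) :
    (Nat.card (XA E X C) : ℚ) = Nat.card (barX E X C) * (Nat.card E / Nat.card C) := by
  have hbarX : barX E X C = orb E X '' XA E X C := by
    ext s
    simp [barX, eq_comm]
  rw [hbarX]
  exact natCard_eq_card_image_mul (orb E X) mem_orb_self (fun _ _ => orb_eq_of_mem)
    (fun _ => orb_subset_XA) (fun _ => natCard_orb)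

/-- The stabilizer of every point of `X_A × X_C` for the `E × B`-action of `orbEB`. -/
def stabEB {R G : Type*} [Ring R] [AddCommGroup G] [Module R G]
    (A B C : Submodule R G) : AddSubgroup (G × B) where
  carrier := {p | p.1 + p.2 ∈ A ∧ p.1 ∈ C}
  add_mem' := fun {p q} hp hq =>
    ⟨by simpa [add_add_add_comm] using A.add_mem hp.1 hq.1, C.add_mem hp.2 hq.2⟩
  zero_mem' := by simp
  neg_mem' := fun {p} hp => ⟨by simpa [neg_add, add_comm] using A.neg_mem hp.1, C.neg_mem hp.2⟩

theorem natCard_stabEB (A B C : Submodule (ZMod 2) E) :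
    Nat.card (stabEB A B C) = Nat.card (UABC E A B C) :=
  Nat.card_congr
    { toFun := fun p => ⟨(-(p.1.1 + p.1.2), p.1.2, p.1.1),
        A.neg_mem p.2.1, p.1.2.2, p.2.2, by simp only; abel⟩
      invFun := fun t => ⟨(t.1.2.2, ⟨t.1.2.1, t.2.2.1⟩), by
          have h : t.1.2.2 + t.1.2.1 = -t.1.1 := by
            rw [eq_neg_iff_add_eq_zero, ← t.2.2.2.2]; abel
          exact h ▸ A.neg_mem t.2.1,
        t.2.2.2.1⟩
      left_inv := fun p => rfl
      right_inv := fun ⟨(a, b, c), _, _, _, habc⟩ => by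
        ext
        · change -(c + b) = a
          rw [neg_eq_iff_add_eq_zero, ← habc]
          abel
        · rfl
        · rfl }

theorem natCard_UABC_pos (A B C : Submodule (ZMod 2) E) : 0 < Nat.card (UABC E A B C) :=
  natCard_stabEB A B C ▸ Nat.card_pos

theorem orbEB_eq_range (B : Submodule (ZMod 2) E) (x y : X) :
    orbEB E X B x y = Set.range fun p : E × B => ((p.1 + p.2) +ᵥ x, p.1 +ᵥ y) := by
  ext q
  simp [orbEB, eq_comm]

theorem natCard_orbEB {A B C : Submodule (ZMod 2) E} {x y : X}
    (hx : x ∈ XA E X A) (hy : y ∈ XA E X C) :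
    (Nat.card (orbEB E X B x y) : ℚ) = Nat.card E * Nat.card B / Nat.card (UABC E A B C) := by
  have hU : (Nat.card (UABC E A B C) : ℚ) ≠ 0 := by exact_mod_cast (natCard_UABC_pos A B C).ne'
  have hstab (p q : E × B) :
      ((p.1 + p.2) +ᵥ x, p.1 +ᵥ y) = ((q.1 + q.2) +ᵥ x, q.1 +ᵥ y) ↔ q - p ∈ stabEB A B C := by
    rw [Prod.mk.injEq, vadd_eq_vadd_iff_sub_mem hx, vadd_eq_vadd_iff_sub_mem hy]
    change _ ↔ (q - p).1 + (q - p).2 ∈ A ∧ (q - p).1 ∈ C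
    simp only [Prod.fst_sub, Prod.snd_sub, AddSubgroupClass.coe_sub, add_sub_add_comm]
  rw [eq_div_iff hU, ← natCard_stabEB, orbEB_eq_range,
    ← natCard_eq_card_range_mul_card _ _ hstab, Nat.card_prod, Nat.cast_mul]

theorem mem_orbEB_self (B : Submodule (ZMod 2) E) (x y : X) : (x, y) ∈ orbEB E X B x y :=
  ⟨0, 0, B.zero_mem, by simp⟩

theorem orbEB_eq_of_mem {B : Submodule (ZMod 2) E} {x y : X} {q : X × X}
    (h : q ∈ orbEB E X B x y) : orbEB E X B q.1 q.2 = orbEB E X B x y := by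
  obtain ⟨e, b, hb, rfl⟩ := h
  ext q'
  constructor
  · rintro ⟨e', b', hb', rfl⟩
    exact ⟨e' + e, b' + b, B.add_mem hb' hb, by simp only [← add_vadd, add_add_add_comm]⟩
  · rintro ⟨e', b', hb', rfl⟩
    refine ⟨e' - e, b' - b, B.sub_mem hb' hb, ?_⟩
    simp only [← add_vadd, Prod.mk.injEq]
    constructor <;> congr 1 <;> abel

theorem orbEB_subset_orb_prod_orb (B : Submodule (ZMod 2) E) (x y : X) :
    orbEB E X B x y ⊆ orb E X x ×ˢ orb E X y := by
  rintro _ ⟨e, b, -, rfl⟩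
  exact ⟨⟨e + b, rfl⟩, ⟨e, rfl⟩⟩

theorem p1_orbEB (B : Submodule (ZMod 2) E) (x y : X) :
    p1 X (orbEB E X B x y) = orb E X x := by
  refine Set.Subset.antisymm
    (Set.image_subset_iff.2 fun q hq => (orbEB_subset_orb_prod_orb B x y hq).1) ?_
  rintro _ ⟨e, rfl⟩
  exact ⟨(e +ᵥ x, e +ᵥ y), ⟨e, 0, B.zero_mem, by simp⟩, rfl⟩

theorem image_orbEB_orb_prod_XA {A B C : Submodule (ZMod 2) E} {x₀ : X} (hx₀ : x₀ ∈ XA E X A) :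
    (fun q : X × X => orbEB E X B q.1 q.2) '' (orb E X x₀ ×ˢ XA E X C) =
      {M | IsOrbEB E X A B C M ∧ p1 X M = orb E X x₀} := by
  ext M
  constructor
  · rintro ⟨⟨x, y⟩, ⟨hx, hy⟩, rfl⟩
    exact ⟨⟨x, y, orb_subset_XA hx₀ hx, hy, rfl⟩, (p1_orbEB B x y).trans (orb_eq_of_mem hx)⟩
  · rintro ⟨⟨x, y, -, hy, rfl⟩, hp1⟩
    refine ⟨(x, y), ⟨?_, hy⟩, rfl⟩
    rw [← hp1, p1_orbEB]
    exact mem_orb_self x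

end Orbits

/-- the number of `E × B`-orbits `𝓜` on `X²_{AC}` with `p₁𝓜 = o`
equals `|E|·|X̄_C|·|U_{ABC}|/(|A|·|B|·|C|)`. -/
theorem statement19 (A B C : Submodule (ZMod 2) E) (o : Set X)
    (ho : ∃ x ∈ XA E X A, o = orb E X x) :
    (Nat.card ↥{M : Set (X × X) | IsOrbEB E X A B C M ∧ p1 X M = o} : ℚ) =
      (Nat.card E : ℚ) * (Nat.card ↥(barX E X C) : ℚ) * (Nat.card ↥(UABC E A B C) : ℚ)
        / ((Nat.card ↥A : ℚ) * (Nat.card ↥B : ℚ) * (Nat.card ↥C : ℚ)) := by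
  obtain ⟨x₀, hx₀, rfl⟩ := ho
  have hcount := natCard_eq_card_image_mul (T := orb E X x₀ ×ˢ XA E X C)
    (fun q => orbEB E X B q.1 q.2) (fun q => mem_orbEB_self B q.1 q.2)
    (fun _ _ => orbEB_eq_of_mem)
    (fun q hq => (orbEB_subset_orb_prod_orb B _ _).trans
      (Set.prod_mono (orb_eq_of_mem hq.1).subset (orb_subset_XA hq.2)))
    (fun q hq => natCard_orbEB (orb_subset_XA hx₀ hq.1) hq.2)
  rw [image_orbEB_orb_prod_XA hx₀, Nat.card_congr (Equiv.Set.prod _ _), Nat.card_prod,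
    Nat.cast_mul, natCard_orb hx₀, natCard_XA] at hcount
  have hA : (Nat.card A : ℚ) ≠ 0 := by exact_mod_cast Nat.card_pos.ne'
  have hC : (Nat.card C : ℚ) ≠ 0 := by exact_mod_cast Nat.card_pos.ne'
  have hU : (Nat.card (UABC E A B C) : ℚ) ≠ 0 := by exact_mod_cast (natCard_UABC_pos A B C).ne'
  field_simp at hcount ⊢
  linarith

end Lusztig
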